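/- Let T be a weakly connected test digraph with edge coloring χ : E(T) → 𝒞 and deterministic labels X_e ∈ ⊗_{s∈𝒮_{χ(e)}} M_N(ℂ), let Λ_v (v ∈ V(T)) be deterministic diagonal matrices in M_{N^{#𝒮}}(ℂ), let (Σ_c)_{c∈𝒞} be independent random permutation matrices with Σ_c uniform among the permutation matrices of size N^{#𝒮_c}, and assume N ≥ #V(T). Let T̊ be T with a self-loop added at each vertex v labeled Λ_v, so that τ_{N^{#𝒮}}(T̊) = N^{−#𝒮} Σ_{i : V(T)→[N]^𝒮} ∏_{v∈V(T)} (Λ_v)_{i(v),i(v)} ∏_{e∈E(T)} (X̲_e)_{i(e_+),i(e_−)}. Then 𝔼 τ_{N^{#𝒮}}(T̊) = Σ_{π ∈ 𝒫(V(T))^𝒮 with π_s ≥ ρ_s for all s∈𝒮} N^{Σ_{s∈𝒮}(#π_s − 1)} · λ_N(T,π) · ∏_{c∈𝒞} [ ((N^{#𝒮_c} − #V(T_{π,c}))! / (N^{#𝒮_c})!) · N^{#𝒮_c · #Comp(T_{π,c})} · τ^∘_{N^{#𝒮_c}}(T_{π,c}) ]. -/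
import Mathlib


open Filter MeasureTheory Matrix
open scoped BigOperators Classical

namespace GraphPaper

/-! ### Directed multigraphs (test digraphs) -/

/-- A directed multigraph with vertex type `V` and edge type `E`. -/
structure Digr (V E : Type*) where
  src : E → V
  tgt : E → V

namespace Digr

variable {V E : Type*} (D : Digr V E)

/-- One-step (direction-agnostic) adjacency. -/
def Adj (v w : V) : Prop := ∃ e : E, D.src e = v ∧ D.tgt e = w

/-- The setoid of weakly connected components. -/
def compSetoid : Setoid V := Relation.EqvGen.setoid D.Adj

/-- The weakly connected components. -/
def Components : Type _ := Quotient D.compSetoid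

/-- The number of weakly connected components. -/
noncomputable def ncomp : ℕ := Nat.card D.Components

/-- Weak connectedness. -/
def IsConnected : Prop := Nonempty V ∧ ∀ v w : V, D.compSetoid v w

/-- The digraph with one edge removed. -/
def erase (e₀ : E) : Digr V {e : E // e ≠ e₀} :=
  ⟨fun e => D.src e.1, fun e => D.tgt e.1⟩

/-- `e₀` is a cut edge: removing it increases the number of weakly connected components. -/
def IsCutEdge (e₀ : E) : Prop := D.ncomp < (D.erase e₀).ncomp

/-- Two-edge-connectedness: weakly connected with no cut edge. -/
def IsTwoEdgeConnected : Prop := D.IsConnected ∧ ∀ e : E, ¬ D.IsCutEdge e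

/-- A tree (as an undirected multigraph): connected, with no cycles and no parallel
edges; equivalently, connected and every edge is a cut edge. -/
def IsTree : Prop := D.IsConnected ∧ ∀ e : E, D.IsCutEdge e

/-- Two vertices are related iff they are joined by a path containing no cut edges;
the classes are the two-edge-connected components. -/
def tecSetoid : Setoid V :=
  Relation.EqvGen.setoid (fun v w => ∃ e : E, ¬ D.IsCutEdge e ∧ D.src e = v ∧ D.tgt e = w)

/-- The degree of a two-edge-connected component in the forest `ℱ(D)`:
the number of cut edges incident to it. -/
noncomputable def tecDeg (b : Quotient D.tecSetoid) : ℕ :=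
  Nat.card {e : E // D.IsCutEdge e ∧
    (Quotient.mk D.tecSetoid (D.src e) = b ∨ Quotient.mk D.tecSetoid (D.tgt e) = b)}

/-- `𝔣(D)`: the total number of leaves of the forest `ℱ(D)` of two-edge-connected
components, an isolated vertex counting as two leaves. -/
noncomputable def leafCount : ℕ :=
  ∑ᶠ b : Quotient D.tecSetoid,
    (if D.tecDeg b = 0 then 2 else if D.tecDeg b = 1 then 1 else 0)

/-- The quotient digraph by a partition (setoid) of the vertices. -/
def quotient (s : Setoid V) : Digr (Quotient s) E :=
  ⟨fun e => Quotient.mk s (D.src e), fun e => Quotient.mk s (D.tgt e)⟩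

/-- The subgraph retaining only the edges satisfying `p` (all vertices kept). -/
def restrict (p : E → Prop) : Digr V {e : E // p e} :=
  ⟨fun e => D.src e.1, fun e => D.tgt e.1⟩

/-- The trace of a test digraph with labels `A`. -/
noncomputable def tdTrace {ι : Type*} (A : E → Matrix ι ι ℂ) : ℂ :=
  (1 / (Nat.card ι : ℂ) ^ D.ncomp) *
    ∑ᶠ i : V → ι, ∏ᶠ e : E, A e (i (D.tgt e)) (i (D.src e))

/-- The injective trace of a test digraph with labels `A`. -/
noncomputable def tdTraceInj {ι : Type*} (A : E → Matrix ι ι ℂ) : ℂ :=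
  (1 / (Nat.card ι : ℂ) ^ D.ncomp) *
    ∑ᶠ i : V → ι,
      if Function.Injective i then ∏ᶠ e : E, A e (i (D.tgt e)) (i (D.src e)) else 0

end Digr

/-! ### Colored digraphs, partitions, and the associated auxiliary graphs -/

section Colored

variable {V E S C : Type*}

/-- `ρ_s` : the partition of `V` into weakly connected components of the subgraph of `D`
retaining only edges whose color is not related to the string `s`. -/
def rhoSetoid (D : Digr V E) (χ : E → C) (rel : S → C → Prop) (s : S) : Setoid V :=
  Relation.EqvGen.setoid (fun v w => ∃ e : E, ¬ rel s (χ e) ∧ D.src e = v ∧ D.tgt e = w)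

/-- `ω_{π,c} = ⋀_{s ∈ 𝒮_c} π_s`, the common refinement. -/
def omegaSetoid (rel : S → C → Prop) (π : S → Setoid V) (c : C) : Setoid V :=
  ⨅ s : {s : S // rel s c}, π s.1

/-- `T_{π,c} = (T|_c)/ω_{π,c}`. -/
def Tpc (D : Digr V E) (χ : E → C) (rel : S → C → Prop) (π : S → Setoid V) (c : C) :
    Digr (Quotient (omegaSetoid rel π c)) {e : E // χ e = c} :=
  (D.restrict (fun e => χ e = c)).quotient (omegaSetoid rel π c)

/-- `𝒢_{π,s} = (T|_{𝒞_s})/π_s`. -/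
def Gps (D : Digr V E) (χ : E → C) (rel : S → C → Prop) (π : S → Setoid V) (s : S) :
    Digr (Quotient (π s)) {e : E // rel s (χ e)} :=
  (D.restrict (fun e => rel s (χ e))).quotient (π s)

/-- The map `h_{s,c} : V(T_{π,c}) → V(𝒢_{π,s})`, `[v]_{ω_{π,c}} ↦ [v]_{π_s}`. -/
def hmap (rel : S → C → Prop) (π : S → Setoid V) {s : S} {c : C} (h : rel s c) :
    Quotient (omegaSetoid rel π c) → Quotient (π s) :=
  fun q => Quotient.liftOn q (fun v => Quotient.mk (π s) v)
    (fun a b hab => Quot.sound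
      (Setoid.le_def.mp (iInf_le (fun s' : {s' : S // rel s' c} => π s'.1) ⟨s, h⟩) hab))

/-- The vertex set of the graph of colored components `GCC(T,π,s)`. -/
def GCCVert (D : Digr V E) (χ : E → C) (rel : S → C → Prop) (π : S → Setoid V) (s : S) :
    Type _ :=
  Quotient (π s) ⊕ (Σ c : {c : C // rel s c}, (Tpc D χ rel π c.1).Components)

/-- The edge set of `GCC(T,π,s)`. -/
def GCCEdge (rel : S → C → Prop) (π : S → Setoid V) (s : S) : Type _ :=
  Σ c : {c : C // rel s c}, Quotient (omegaSetoid rel π c.1)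

/-- The graph of colored components `GCC(T,π,s)`: the bipartite multigraph with an edge
for each `v ∈ V(T_{π,c})` (`c ∈ 𝒞_s`), joining the component of `T_{π,c}` containing `v`
to `h_{s,c}(v)`. -/
def GCC (D : Digr V E) (χ : E → C) (rel : S → C → Prop) (π : S → Setoid V) (s : S) :
    Digr (GCCVert D χ rel π s) (GCCEdge rel π s) where
  src := fun p => Sum.inr ⟨p.1, Quotient.mk (Tpc D χ rel π p.1.1).compSetoid p.2⟩
  tgt := fun p => Sum.inl (hmap rel π p.1.2 p.2)

end Colored

/-! ### The matrix model -/

section Model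

variable {S C : Type*}

/-- Index set for `⊗_{s ∈ 𝒮} M_N(ℂ)`. -/
abbrev BigIx (S : Type*) (N : ℕ) := S → Fin N

/-- Index set for `⊗_{s ∈ 𝒮_c} M_N(ℂ)`. -/
abbrev ColIx (rel : S → C → Prop) (c : C) (N : ℕ) := {s : S // rel s c} → Fin N

/-- View a matrix in `⊗_{s ∈ 𝒮_c} M_N(ℂ)` inside `⊗_{s ∈ 𝒮} M_N(ℂ)` by tensoring with
the identity on the remaining factors. -/
noncomputable def embed [Fintype S] (rel : S → C → Prop) (c : C) {N : ℕ}
    (X : Matrix (ColIx rel c N) (ColIx rel c N) ℂ) :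
    Matrix (BigIx S N) (BigIx S N) ℂ :=
  Matrix.of fun a b =>
    if (∀ s : S, ¬ rel s c → a s = b s) then X (fun s => a s.1) (fun s => b s.1) else 0

/-- The permutation matrix of a permutation. -/
def permMat {ι : Type*} [DecidableEq ι] (σ : Equiv.Perm ι) : Matrix ι ι ℂ :=
  Matrix.of fun i j => if σ j = i then 1 else 0

/-- `X̲ = Σ_c^* X Σ_c`, viewed inside `⊗_{s ∈ 𝒮} M_N(ℂ)`. -/
noncomputable def conjEmbed [Fintype S] (rel : S → C → Prop) (c : C) {N : ℕ}
    (σc : Equiv.Perm (ColIx rel c N))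
    (X : Matrix (ColIx rel c N) (ColIx rel c N) ℂ) :
    Matrix (BigIx S N) (BigIx S N) ℂ :=
  embed rel c ((permMat σc)ᴴ * X * permMat σc)

/-- `Δ`, the conditional expectation onto the diagonal. -/
def diagPart {ι : Type*} [DecidableEq ι] (M : Matrix ι ι ℂ) : Matrix ι ι ℂ :=
  Matrix.diagonal fun i => M i i

/-- The normalized `L²`-norm `‖M‖₂ = tr_n(M^*M)^{1/2}`. -/
noncomputable def l2norm {ι : Type*} [Fintype ι] (M : Matrix ι ι ℂ) : ℝ :=
  Real.sqrt ((Matrix.trace (Mᴴ * M) / (Fintype.card ι : ℂ)).re)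

/-- The operator norm of a matrix acting on Euclidean space. -/
noncomputable def opNorm {ι : Type*} [Fintype ι] [DecidableEq ι] (M : Matrix ι ι ℂ) : ℝ :=
  ‖Matrix.toEuclideanCLM (𝕜 := ℂ) M‖

/-- The ordered product `f 0 * f 1 * ⋯ * f (k-1)`. -/
def prodList {M : Type*} [Monoid M] (k : ℕ) (f : Fin k → M) : M :=
  ((List.finRange k).map f).prod

/-- `γ_N(T,π)`. -/
noncomputable def gammaN {V E : Type*} [Fintype S] (rel : S → C → Prop)
    (D : Digr V E) (χ : E → C) (N : ℕ)
    (X : (e : E) → Matrix (ColIx rel (χ e) N) (ColIx rel (χ e) N) ℂ)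
    (Λ : V → Matrix (BigIx S N) (BigIx S N) ℂ)
    (π : S → Setoid V)
    (σ : (c : C) → Equiv.Perm (ColIx rel c N)) : ℂ :=
  (1 / (N : ℂ) ^ (Nat.card S)) *
    ∑ᶠ i : V → BigIx S N,
      if (∀ s : S, Setoid.ker (fun v => i v s) = π s) then
        (∏ᶠ v : V, Λ v (i v) (i v)) *
          ∏ᶠ e : E, (conjEmbed rel (χ e) (σ (χ e)) (X e)) (i (D.tgt e)) (i (D.src e))
      else 0

/-- `λ_N(T,π)`. -/
noncomputable def lambdaN {V : Type*} [Fintype S] (N : ℕ)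
    (Λ : V → Matrix (BigIx S N) (BigIx S N) ℂ) (π : S → Setoid V) : ℂ :=
  (1 / (N : ℂ) ^ (∑ᶠ s : S, Nat.card (Quotient (π s)))) *
    ∑ᶠ i : V → BigIx S N,
      if (∀ s : S, Setoid.ker (fun v => i v s) = π s) then (∏ᶠ v : V, Λ v (i v) (i v))
      else 0

/-- `τ_{N^{#𝒮}}(T̊)`, the trace of the test digraph `T` with a `Λ_v`-labelled self-loop
added at each vertex `v`. -/
noncomputable def ringTrace {V E : Type*} [Fintype S] (rel : S → C → Prop)
    (D : Digr V E) (χ : E → C) (N : ℕ)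
    (X : (e : E) → Matrix (ColIx rel (χ e) N) (ColIx rel (χ e) N) ℂ)
    (Λ : V → Matrix (BigIx S N) (BigIx S N) ℂ)
    (σ : (c : C) → Equiv.Perm (ColIx rel c N)) : ℂ :=
  (1 / (N : ℂ) ^ (Nat.card S)) *
    ∑ᶠ i : V → BigIx S N,
      (∏ᶠ v : V, Λ v (i v) (i v)) *
        ∏ᶠ e : E, (conjEmbed rel (χ e) (σ (χ e)) (X e)) (i (D.tgt e)) (i (D.src e))

/-- Expectation with respect to independent uniformly random permutations, one for each
color: the average over all tuples of permutations. -/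
noncomputable def Eperm [Fintype S] (rel : S → C → Prop) (N : ℕ)
    (f : ((c : C) → Equiv.Perm (ColIx rel c N)) → ℂ) : ℂ :=
  (∑ᶠ σ : (c : C) → Equiv.Perm (ColIx rel c N), f σ) /
    (Nat.card ((c : C) → Equiv.Perm (ColIx rel c N)) : ℂ)

/-- Transport a matrix label along an equality of colors. -/
def castCol (rel : S → C → Prop) {N : ℕ} {c c' : C} (h : c = c')
    (X : Matrix (ColIx rel c N) (ColIx rel c N) ℂ) :
    Matrix (ColIx rel c' N) (ColIx rel c' N) ℂ := h ▸ X

/-- The uniform probability measure on the tuples of permutations (with the discrete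
`σ`-algebra). -/
noncomputable def uniformTupleMeasure [Fintype C] [Fintype S] (rel : S → C → Prop) (N : ℕ) :=
  letI : MeasurableSpace ((c : C) → Equiv.Perm (ColIx rel c N)) := ⊤
  haveI : Nonempty ((c : C) → Equiv.Perm (ColIx rel c N)) := ⟨fun _ => 1⟩
  ((PMF.uniformOfFintype ((c : C) → Equiv.Perm (ColIx rel c N))).toMeasure :
    Measure ((c : C) → Equiv.Perm (ColIx rel c N)))

/-- The tuple `(Σ_c)_{c ∈ 𝒞}` of random permutations is uniformly distributed on the
product (equivalently, the `Σ_c` are independent and each uniform). -/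
def hasUniformLaw [Fintype C] [Fintype S] (rel : S → C → Prop) {Ω : Type*}
    [MeasurableSpace Ω] (P : Measure Ω) (N : ℕ)
    (Sp : (c : C) → Ω → Equiv.Perm (ColIx rel c N)) : Prop :=
  letI : MeasurableSpace ((c : C) → Equiv.Perm (ColIx rel c N)) := ⊤
  Measure.map (fun ω c => Sp c ω) P = uniformTupleMeasure rel N

end Model

/-- A word `χ : [k] → 𝒞` is `𝒢`-reduced. -/
def GReduced {C : Type*} (Edg : C → C → Prop) {k : ℕ} (χ : Fin k → C) : Prop :=
  ∀ i j : Fin k, i < j → χ i = χ j → ∃ l : Fin k, i < l ∧ l < j ∧ ¬ Edg (χ i) (χ l)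

/-! ### Sofic groups and graph products of groups -/

/-- The normalized Hamming distance on `S_N`. -/
noncomputable def dHamm {n : ℕ} (σ τ : Equiv.Perm (Fin n)) : ℝ :=
  ((Finset.univ.filter fun j : Fin n => σ j ≠ τ j).card : ℝ) / n

/-- A group is sofic if it admits an asymptotic homomorphism into permutation groups. -/
def IsSofic (Γ : Type*) [Group Γ] : Prop :=
  ∃ (Nk : ℕ → ℕ) (σ : (k : ℕ) → Γ → Equiv.Perm (Fin (Nk k))),
    Tendsto Nk atTop atTop ∧
    (∀ g h : Γ, Tendsto (fun k => dHamm (σ k g * σ k h) (σ k (g * h))) atTop (nhds 0)) ∧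
    (∀ g : Γ, Tendsto (fun k => dHamm (σ k g) 1) atTop
      (nhds (if g = 1 then 0 else 1)))

/-- The normal subgroup of the free product generated by the commutators of elements of
vertex groups joined by an edge. -/
def graphProductKer {C : Type*} (Edg : C → C → Prop) (G : C → Type*)
    [∀ c, Group (G c)] : Subgroup (Monoid.CoprodI G) :=
  Subgroup.normalClosure
    {x | ∃ (c c' : C) (_ : Edg c c') (g : G c) (g' : G c'),
      x = Monoid.CoprodI.of g * Monoid.CoprodI.of g' *
        (Monoid.CoprodI.of g)⁻¹ * (Monoid.CoprodI.of g')⁻¹}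

/-- The graph product of the groups `(G c)_{c ∈ 𝒞}` over the graph with edge relation
`Edg`. -/
def GraphProduct {C : Type*} (Edg : C → C → Prop) (G : C → Type*) [∀ c, Group (G c)] :
    Type _ :=
  Monoid.CoprodI G ⧸ graphProductKer Edg G

instance graphProductKer_normal {C : Type*} (Edg : C → C → Prop) (G : C → Type*)
    [∀ c, Group (G c)] : (graphProductKer Edg G).Normal :=
  Subgroup.normalClosure_normal

instance {C : Type*} (Edg : C → C → Prop) (G : C → Type*) [∀ c, Group (G c)] :
    Group (GraphProduct Edg G) :=
  QuotientGroup.Quotient.group _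

/-- The group element corresponding to a word in the generators and their inverses:
the letter `(j, tt)` is `g_j`, and `(j, ff)` is `g_j⁻¹`. -/
def wordElemG {Γ : Type*} [Group Γ] (g : ℕ → Γ) {m : ℕ} (w : Fin m → ℕ × Bool) : Γ :=
  prodList m (fun i => if (w i).2 then g (w i).1 else (g (w i).1)⁻¹)

/-- The matrix product corresponding to a word in permutation matrices and their
inverses. -/
noncomputable def wordMat {N m : ℕ} (T : ℕ → Equiv.Perm (Fin N)) (w : Fin m → ℕ × Bool) :
    Matrix (Fin N) (Fin N) ℂ :=
  prodList m (fun i => if (w i).2 then permMat (T (w i).1) else (permMat (T (w i).1))⁻¹)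


section Aux
open Function


/-- Permutations extending a given bijection between ranges of two injections. -/
noncomputable def permExtendEquiv {ι Q : Type*} [Fintype ι] [DecidableEq ι]
    {j k : Q → ι} (hj : Injective j) (hk : Injective k) :
    {σ : Equiv.Perm ι // ∀ q, σ (j q) = k q} ≃ (↥(Set.range j)ᶜ ≃ ↥(Set.range k)ᶜ) where
  toFun σ := Equiv.subtypeEquiv σ.1 (by
    intro a
    simp only [Set.mem_compl_iff]
    constructor
    · intro ha hb
      obtain ⟨q, hq⟩ := hb
      exact ha ⟨q, σ.1.injective (by rw [σ.2 q, hq])⟩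
    · intro ha hb
      obtain ⟨q, hq⟩ := hb
      exact ha ⟨q, by rw [← σ.2 q, hq]⟩)
  invFun τ := ⟨(Equiv.Set.sumCompl (Set.range j)).symm.trans
      ((Equiv.sumCongr ((Equiv.ofInjective j hj).symm.trans (Equiv.ofInjective k hk)) τ).trans
        (Equiv.Set.sumCompl (Set.range k))), by
    intro q
    have hm : j q ∈ Set.range j := ⟨q, rfl⟩
    simp only [Equiv.trans_apply, Equiv.Set.sumCompl_symm_apply_of_mem hm,
      Equiv.sumCongr_apply, Sum.map_inl, Equiv.Set.sumCompl_apply_inl]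
    congr 1
    have : (Equiv.ofInjective j hj).symm ⟨j q, hm⟩ = q := by
      rw [Equiv.symm_apply_eq]; rfl
    rw [this]; rfl⟩
  left_inv := by
    rintro ⟨σ, hσ⟩
    ext x
    by_cases hx : x ∈ Set.range j
    · obtain ⟨q, rfl⟩ := hx
      have hm : j q ∈ Set.range j := ⟨q, rfl⟩
      simp only [Equiv.trans_apply, Equiv.Set.sumCompl_symm_apply_of_mem hm,
        Equiv.sumCongr_apply, Sum.map_inl, Equiv.Set.sumCompl_apply_inl]
      have : (Equiv.ofInjective j hj).symm ⟨j q, hm⟩ = q := by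
        rw [Equiv.symm_apply_eq]; rfl
      rw [this, hσ q]; rfl
    · simp only [Equiv.trans_apply, Equiv.Set.sumCompl_symm_apply_of_notMem hx,
        Equiv.sumCongr_apply, Sum.map_inr, Equiv.Set.sumCompl_apply_inr]
      rfl
  right_inv := by
    intro τ
    ext x
    obtain ⟨x, hx⟩ := x
    have hx' : x ∉ Set.range j := hx
    simp only [Equiv.subtypeEquiv_apply, Equiv.trans_apply,
      Equiv.Set.sumCompl_symm_apply_of_notMem hx', Equiv.sumCongr_apply, Sum.map_inr,
      Equiv.Set.sumCompl_apply_inr]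

lemma card_perm_extend {ι Q : Type*} [Fintype ι] [Fintype Q] [DecidableEq ι]
    {j k : Q → ι} (hj : Injective j) (hk : Injective k) :
    Nat.card {σ : Equiv.Perm ι // ∀ q, σ (j q) = k q}
      = (Fintype.card ι - Fintype.card Q).factorial := by
  have hcardj : Fintype.card ↥(Set.range j) = Fintype.card Q :=
    Fintype.card_congr (Equiv.ofInjective j hj).symm
  have hcardk : Fintype.card ↥(Set.range k) = Fintype.card Q :=
    Fintype.card_congr (Equiv.ofInjective k hk).symm
  have h1 : Fintype.card ↥(Set.range j)ᶜ = Fintype.card ι - Fintype.card Q := by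
    rw [Fintype.card_compl_set, hcardj]
  have h2 : Fintype.card ↥(Set.range k)ᶜ = Fintype.card ι - Fintype.card Q := by
    rw [Fintype.card_compl_set, hcardk]
  rw [Nat.card_congr (permExtendEquiv hj hk), Nat.card_eq_fintype_card,
    Fintype.card_equiv (Fintype.equivOfCardEq (h1.trans h2.symm)), h1]



variable {ι Q : Type*} [Fintype ι] [Fintype Q] [DecidableEq ι]

lemma sum_perm_comp {j : Q → ι} (hj : Injective j) (F : (Q → ι) → ℂ) :
    ∑ σ : Equiv.Perm ι, F (fun q => σ (j q)) =
      ((Fintype.card ι - Fintype.card Q).factorial : ℂ) *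
        ∑ k : Q → ι, if Injective k then F k else 0 := by
  have h1 : ∀ σ : Equiv.Perm ι,
      F (fun q => σ (j q)) = ∑ k : Q → ι, if (fun q => σ (j q)) = k then F k else 0 := by
    intro σ
    rw [Finset.sum_ite_eq Finset.univ (fun q => σ (j q)) F, if_pos (Finset.mem_univ _)]
  simp_rw [h1]
  rw [Finset.sum_comm]
  rw [Finset.mul_sum]
  refine Finset.sum_congr rfl fun k _ => ?_
  rw [Finset.sum_ite, Finset.sum_const_zero, add_zero, Finset.sum_const, nsmul_eq_mul]
  have hcard : (Finset.univ.filter fun σ : Equiv.Perm ι => (fun q => σ (j q)) = k).card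
      = Nat.card {σ : Equiv.Perm ι // ∀ q, σ (j q) = k q} := by
    rw [Nat.card_eq_fintype_card, Fintype.card_subtype]
    congr 1
    apply Finset.filter_congr
    intro σ _
    simp [funext_iff]
  by_cases hk : Injective k
  · rw [if_pos hk, hcard, card_perm_extend hj hk, mul_comm]
  · rw [if_neg hk, mul_zero]
    have he : (Finset.univ.filter fun σ : Equiv.Perm ι => (fun q => σ (j q)) = k) = ∅ := by
      rw [Finset.filter_eq_empty_iff]
      intro σ _ hek
      exact hk (hek ▸ (σ.injective.comp hj))
    rw [he, Finset.card_empty, Nat.cast_zero, zero_mul]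

/-- characterization of the infimum of setoids -/
lemma setoid_iInf_iff {κ α : Type*} (π : κ → Setoid α) (x y : α) :
    (⨅ i, π i) x y ↔ ∀ i, π i x y := by
  constructor
  · intro h i
    exact (Setoid.le_def.mp (iInf_le π i)) h
  · intro h
    let t : Setoid α := ⟨fun a b => ∀ i, π i a b,
      ⟨fun a i => (π i).refl a, fun h i => (π i).symm (h i),
        fun h1 h2 i => (π i).trans (h1 i) (h2 i)⟩⟩
    have ht : t ≤ ⨅ i, π i := le_iInf fun i => Setoid.le_def.mpr fun h' => h' i
    exact Setoid.le_def.mp ht h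

lemma ker_iff {α β : Type*} (f : α → β) (x y : α) : Setoid.ker f x y ↔ f x = f y := Iff.rfl

lemma eqvGen_le_iff {α : Type*} (r : α → α → Prop) (s : Setoid α) :
    Relation.EqvGen.setoid r ≤ s ↔ ∀ x y, r x y → s x y := by
  constructor
  · intro h x y hr
    exact Setoid.le_def.mp h (Relation.EqvGen.rel x y hr)
  · exact Setoid.eqvGen_le

instance setoidFinite {α : Type*} [Finite α] : Finite (Setoid α) :=
  Finite.of_injective (fun s : Setoid α => ⇑s)
    (fun a b h => Setoid.ext fun x y => by simp only at h; rw [h])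


end Aux

section Main
open Function

lemma permMat_conj_apply {ι : Type*} [Fintype ι] [DecidableEq ι] (σ : Equiv.Perm ι)
    (X : Matrix ι ι ℂ) (a b : ι) :
    ((permMat σ)ᴴ * X * permMat σ) a b = X (σ a) (σ b) := by
  simp only [Matrix.mul_apply, Matrix.conjTranspose_apply, permMat, Matrix.of_apply]
  simp [apply_ite (starRingEnd ℂ), Finset.sum_ite_eq, Finset.mul_sum, Finset.sum_mul,
    ite_mul, mul_ite]

lemma conjEmbed_apply {C S : Type*} [Fintype S] (rel : S → C → Prop) {N : ℕ}
    (c₀ c : C) (h : c₀ = c) (X : Matrix (ColIx rel c₀ N) (ColIx rel c₀ N) ℂ)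
    (σ : (c : C) → Equiv.Perm (ColIx rel c N)) (a b : BigIx S N) :
    conjEmbed rel c₀ (σ c₀) X a b
      = if (∀ s : S, ¬ rel s c₀ → a s = b s) then
          (castCol rel h X) (σ c (fun s => a s.1)) (σ c (fun s => b s.1)) else 0 := by
  subst h
  rw [show castCol rel rfl X = X from rfl]
  simp only [conjEmbed, embed, Matrix.of_apply, permMat_conj_apply]

lemma castCol_entry {C S : Type*} [Fintype S] (rel : S → C → Prop) {N : ℕ}
    {c₀ c : C} (h : c₀ = c) (X : Matrix (ColIx rel c₀ N) (ColIx rel c₀ N) ℂ)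
    (σ : (c : C) → Equiv.Perm (ColIx rel c N)) (a b : BigIx S N) :
    X (σ c₀ (fun s => a s.1)) (σ c₀ (fun s => b s.1))
      = (castCol rel h X) (σ c (fun s => a s.1)) (σ c (fun s => b s.1)) := by
  subst h; rfl

lemma rho_le_iff {V E S C : Type*} (D : Digr V E) (χ : E → C) (rel : S → C → Prop)
    (s : S) (κ : Setoid V) :
    rhoSetoid D χ rel s ≤ κ ↔ ∀ e : E, ¬ rel s (χ e) → κ (D.src e) (D.tgt e) := by
  rw [rhoSetoid, eqvGen_le_iff]
  constructor
  · intro h e he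
    exact h _ _ ⟨e, he, rfl, rfl⟩
  · rintro h x y ⟨e, he, rfl, rfl⟩
    exact h e he

lemma edge_prod {C S V E : Type} [Fintype C] [Fintype S] [Fintype V] [Fintype E]
    (rel : S → C → Prop) (D : Digr V E) (χ : E → C) (N : ℕ)
    (X : (e : E) → Matrix (ColIx rel (χ e) N) (ColIx rel (χ e) N) ℂ)
    (σ : (c : C) → Equiv.Perm (ColIx rel c N)) (i : V → BigIx S N) :
    (∏ e : E, conjEmbed rel (χ e) (σ (χ e)) (X e) (i (D.tgt e)) (i (D.src e)))
      = if (∀ s : S, rhoSetoid D χ rel s ≤ Setoid.ker fun v => i v s) then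
          ∏ c : C, ∏ e : {e : E // χ e = c},
            (castCol rel e.2 (X e.1)) (σ c (fun s => i (D.tgt e.1) s.1))
              (σ c (fun s => i (D.src e.1) s.1))
        else 0 := by
  have h1 : ∀ e : E, conjEmbed rel (χ e) (σ (χ e)) (X e) (i (D.tgt e)) (i (D.src e))
      = if (∀ s : S, ¬ rel s (χ e) → i (D.tgt e) s = i (D.src e) s) then
          (X e) (σ (χ e) (fun s => i (D.tgt e) s.1)) (σ (χ e) (fun s => i (D.src e) s.1))
        else 0 :=
    fun e => conjEmbed_apply rel (χ e) (χ e) rfl (X e) σ _ _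
  simp_rw [h1]
  rw [Finset.prod_ite_zero]
  have hcond : (∀ e ∈ Finset.univ, ∀ s : S, ¬ rel s (χ e) → i (D.tgt e) s = i (D.src e) s)
      ↔ (∀ s : S, rhoSetoid D χ rel s ≤ Setoid.ker fun v => i v s) := by
    constructor
    · intro h s
      rw [rho_le_iff]
      intro e he
      exact ((h e (Finset.mem_univ e)) s he).symm
    · intro h e _ s he
      exact (((rho_le_iff D χ rel s _).mp (h s)) e he).symm
  have hbody : (∏ e : E, (X e) (σ (χ e) (fun s => i (D.tgt e) s.1)) (σ (χ e) (fun s => i (D.src e) s.1)))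
      = ∏ c : C, ∏ e : {e : E // χ e = c},
          (castCol rel e.2 (X e.1)) (σ c (fun s => i (D.tgt e.1) s.1))
            (σ c (fun s => i (D.src e.1) s.1)) := by
    rw [← Fintype.prod_fiberwise χ
    (fun e => (X e) (σ (χ e) (fun s => i (D.tgt e) s.1)) (σ (χ e) (fun s => i (D.src e) s.1)))]
    refine Finset.prod_congr rfl fun c _ => Finset.prod_congr rfl fun e _ => ?_
    exact castCol_entry rel e.2 (X e.1) σ _ _
  rw [hbody]
  simp only [hcond]



lemma sum_univ_congr {α M : Type*} [AddCommMonoid M] (i1 i2 : Fintype α) (f g : α → M)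
    (h : ∀ a, f a = g a) :
    @Finset.sum α M _ (@Finset.univ α i1) f = @Finset.sum α M _ (@Finset.univ α i2) g := by
  cases Subsingleton.elim i1 i2
  exact Finset.sum_congr rfl fun a _ => h a

lemma omega_iff {V S C : Type*} (rel : S → C → Prop) (π : S → Setoid V) (c : C) (v w : V) :
    omegaSetoid rel π c v w ↔ ∀ s : {s : S // rel s c}, π s.1 v w :=
  setoid_iInf_iff _ v w

set_option maxHeartbeats 2000000 in
lemma per_color {C S V E : Type} [Fintype C] [Fintype S] [Fintype V] [Fintype E]
    (rel : S → C → Prop) (D : Digr V E) (χ : E → C) {N : ℕ} (hN : 0 < N)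
    (X : (e : E) → Matrix (ColIx rel (χ e) N) (ColIx rel (χ e) N) ℂ)
    (π : S → Setoid V) (i : V → BigIx S N)
    (hker : ∀ s : S, Setoid.ker (fun v => i v s) = π s) (c : C) :
    (∑ σc : Equiv.Perm (ColIx rel c N), ∏ e : {e : E // χ e = c},
        (castCol rel e.2 (X e.1)) (σc (fun s => i (D.tgt e.1) s.1))
          (σc (fun s => i (D.src e.1) s.1)))
      / ((Fintype.card (ColIx rel c N)).factorial : ℂ)
    = ((((N ^ Nat.card {s : S // rel s c} -
            Nat.card (Quotient (omegaSetoid rel π c))).factorial : ℂ) /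
          ((N ^ Nat.card {s : S // rel s c}).factorial : ℂ))
        * (N : ℂ) ^ (Nat.card {s : S // rel s c} * (Tpc D χ rel π c).ncomp)
        * (Tpc D χ rel π c).tdTraceInj (fun e => castCol rel e.2 (X e.1))) := by
  have wd : ∀ v w : V, omegaSetoid rel π c v w →
      (fun s : {s : S // rel s c} => i v s.1) = (fun s => i w s.1) := by
    intro v w h
    funext s
    have h2 : π s.1 v w := (omega_iff rel π c v w).mp h s
    rw [← hker s.1] at h2
    exact h2
  let j : Quotient (omegaSetoid rel π c) → ColIx rel c N :=
    Quotient.lift (fun v => (fun s : {s : S // rel s c} => i v s.1)) wd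
  have hj : Function.Injective j := by
    intro q1 q2 h
    obtain ⟨v, rfl⟩ := Quotient.exists_rep q1
    obtain ⟨w, rfl⟩ := Quotient.exists_rep q2
    refine Quotient.sound ((omega_iff rel π c v w).mpr fun s => ?_)
    rw [← hker s.1]
    exact congrFun h s
  let F : (Quotient (omegaSetoid rel π c) → ColIx rel c N) → ℂ := fun k =>
    ∏ e : {e : E // χ e = c},
      (castCol rel e.2 (X e.1)) (k ((Tpc D χ rel π c).tgt e)) (k ((Tpc D χ rel π c).src e))
  have hLHS : (∑ σc : Equiv.Perm (ColIx rel c N), ∏ e : {e : E // χ e = c},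
      (castCol rel e.2 (X e.1)) (σc (fun s => i (D.tgt e.1) s.1))
        (σc (fun s => i (D.src e.1) s.1)))
      = ∑ σc : Equiv.Perm (ColIx rel c N), F (fun q => σc (j q)) := rfl
  rw [hLHS, sum_perm_comp hj F]
  rw [Digr.tdTraceInj]
  simp only [finsum_eq_sum_of_fintype, finprod_eq_prod_of_fintype]
  have hcι : Fintype.card (ColIx rel c N) = N ^ Nat.card {s : S // rel s c} := by
    rw [Nat.card_eq_fintype_card, Fintype.card_fun, Fintype.card_fin]
  have hcQ : Fintype.card (Quotient (omegaSetoid rel π c))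
      = Nat.card (Quotient (omegaSetoid rel π c)) := Nat.card_eq_fintype_card.symm
  have hNcι : (Nat.card (ColIx rel c N) : ℂ) = (N : ℂ) ^ Nat.card {s : S // rel s c} := by
    rw [Nat.card_eq_fintype_card, hcι]; push_cast; ring
  rw [hNcι, hcι, hcQ, pow_mul]
  have hfac1 : ((N ^ Nat.card {s : S // rel s c}).factorial : ℂ) ≠ 0 :=
    Nat.cast_ne_zero.mpr (Nat.factorial_ne_zero _)
  have hNpow : ((N : ℂ) ^ Nat.card {s : S // rel s c}) ^ (Tpc D χ rel π c).ncomp ≠ 0 := by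
    apply pow_ne_zero
    apply pow_ne_zero
    exact_mod_cast Nat.pos_iff_ne_zero.mp hN
  have hstep : ∀ (Aq Bq Cq : ℂ) (Sq Sq' : ℂ), Sq = Sq' → Bq ≠ 0 → Cq ≠ 0 →
      (Aq * Sq) / Bq = Aq / Bq * Cq * (1 / Cq * Sq') := by
    rintro Aq Bq Cq Sq Sq' rfl hB hC
    field_simp
  refine hstep _ _ _ _ _ ?_ hfac1 hNpow
  refine sum_univ_congr _ _ _ _ fun k => ?_
  simp only [F]


lemma sigma_sum {C S V E : Type} [Fintype C] [Fintype S] [Fintype V] [Fintype E]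
    (rel : S → C → Prop) (D : Digr V E) (χ : E → C) (N : ℕ)
    (X : (e : E) → Matrix (ColIx rel (χ e) N) (ColIx rel (χ e) N) ℂ)
    (i : V → BigIx S N) :
    (∑ σ : (c : C) → Equiv.Perm (ColIx rel c N),
        ∏ e : E, conjEmbed rel (χ e) (σ (χ e)) (X e) (i (D.tgt e)) (i (D.src e)))
      = if (∀ s : S, rhoSetoid D χ rel s ≤ Setoid.ker fun v => i v s) then
          ∏ c : C, ∑ σc : Equiv.Perm (ColIx rel c N), ∏ e : {e : E // χ e = c},
            (castCol rel e.2 (X e.1)) (σc (fun s => i (D.tgt e.1) s.1))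
              (σc (fun s => i (D.src e.1) s.1))
        else 0 := by
  have h1 : ∀ σ : (c : C) → Equiv.Perm (ColIx rel c N),
      (∏ e : E, conjEmbed rel (χ e) (σ (χ e)) (X e) (i (D.tgt e)) (i (D.src e)))
        = if (∀ s : S, rhoSetoid D χ rel s ≤ Setoid.ker fun v => i v s) then
            ∏ c : C, ∏ e : {e : E // χ e = c},
              (castCol rel e.2 (X e.1)) (σ c (fun s => i (D.tgt e.1) s.1))
                (σ c (fun s => i (D.src e.1) s.1))
          else 0 := fun σ => edge_prod rel D χ N X σ i
  simp_rw [h1]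
  by_cases hcond : (∀ s : S, rhoSetoid D χ rel s ≤ Setoid.ker fun v => i v s)
  · simp only [if_pos hcond]
    rw [Finset.prod_univ_sum]
    rw [Fintype.piFinset_univ]
  · simp only [if_neg hcond, Finset.sum_const, smul_zero]



/-- The per-color factor appearing in the expansion. -/
noncomputable def colFactor {C S V E : Type} [Fintype C] [Fintype S] [Fintype V] [Fintype E]
    (rel : S → C → Prop) (D : Digr V E) (χ : E → C) (N : ℕ)
    (X : (e : E) → Matrix (ColIx rel (χ e) N) (ColIx rel (χ e) N) ℂ)
    (π : S → Setoid V) (c : C) : ℂ :=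
  ((((N ^ Nat.card {s : S // rel s c} -
        Nat.card (Quotient (omegaSetoid rel π c))).factorial : ℂ) /
      ((N ^ Nat.card {s : S // rel s c}).factorial : ℂ))
    * (N : ℂ) ^ (Nat.card {s : S // rel s c} * (Tpc D χ rel π c).ncomp)
    * (Tpc D χ rel π c).tdTraceInj (fun e => castCol rel e.2 (X e.1)))

lemma group_by_ker {ι κ : Type*} [Fintype ι] [Fintype κ] (K : ι → κ) (f : ι → ℂ)
    (G : κ → ℂ) :
    ∑ x : ι, f x * G (K x) = ∑ k : κ, (∑ x : ι, if K x = k then f x else 0) * G k := by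
  have h1 : ∀ k : κ, (∑ x : ι, if K x = k then f x else 0) * G k
      = ∑ x : ι, if K x = k then f x * G k else 0 := by
    intro k
    rw [Finset.sum_mul]
    exact Finset.sum_congr rfl fun x _ => by split <;> simp
  simp_rw [h1]
  rw [Finset.sum_comm]
  refine Finset.sum_congr rfl fun x _ => ?_
  rw [Finset.sum_ite_eq Finset.univ (K x) (fun k => f x * G k), if_pos (Finset.mem_univ _)]


set_option maxHeartbeats 1600000 in
/-- **Corollary (expansion of `𝔼 τ_{N^{#𝒮}}(T̊)` over families of partitions).** -/
theorem statement8 {C S V E : Type} [Fintype C] [Fintype S] [Fintype V] [Fintype E]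
    (rel : S → C → Prop) (hne : ∀ c : C, ∃ s : S, rel s c)
    (D : Digr V E) (hconn : D.IsConnected) (χ : E → C) (N : ℕ)
    (hN : Nat.card V ≤ N)
    (X : (e : E) → Matrix (ColIx rel (χ e) N) (ColIx rel (χ e) N) ℂ)
    (Λ : V → Matrix (BigIx S N) (BigIx S N) ℂ) (hΛ : ∀ v, (Λ v).IsDiag) :
    Eperm rel N (ringTrace rel D χ N X Λ)
      = ∑ᶠ π : S → Setoid V,
          if ∀ s : S, rhoSetoid D χ rel s ≤ π s then
            (N : ℂ) ^ (∑ᶠ s : S, (Nat.card (Quotient (π s)) - 1)) * lambdaN N Λ π *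
              ∏ᶠ c : C,
                ((((N ^ Nat.card {s : S // rel s c} -
                      Nat.card (Quotient (omegaSetoid rel π c))).factorial : ℂ) /
                    ((N ^ Nat.card {s : S // rel s c}).factorial : ℂ))
                  * (N : ℂ) ^ (Nat.card {s : S // rel s c} * (Tpc D χ rel π c).ncomp)
                  * (Tpc D χ rel π c).tdTraceInj (fun e => castCol rel e.2 (X e.1)))
          else 0 := by
  classical
  haveI : Nonempty V := hconn.1
  have hNpos : 0 < N := lt_of_lt_of_le Nat.card_pos hN
  haveI : Finite (Setoid V) := setoidFinite
  haveI : Fintype (Setoid V) := Fintype.ofFinite _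
  have hD : (Nat.card ((c : C) → Equiv.Perm (ColIx rel c N)) : ℂ)
      = ∏ c : C, ((Fintype.card (ColIx rel c N)).factorial : ℂ) := by
    rw [Nat.card_pi, Nat.cast_prod]
    exact Finset.prod_congr rfl fun c _ => by
      rw [Nat.card_eq_fintype_card, Fintype.card_perm]
  have key1 : Eperm rel N (ringTrace rel D χ N X Λ)
      = (1 / (N : ℂ) ^ Nat.card S) * ∑ i : V → BigIx S N,
          (∏ v : V, Λ v (i v) (i v)) *
            (if (∀ s : S, rhoSetoid D χ rel s ≤ Setoid.ker fun v => i v s) then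
              ∏ c : C, colFactor rel D χ N X (fun s => Setoid.ker fun v => i v s) c
            else 0) := by
    rw [Eperm, finsum_eq_sum_of_fintype]
    simp only [ringTrace, finsum_eq_sum_of_fintype, finprod_eq_prod_of_fintype]
    rw [← Finset.mul_sum, Finset.sum_comm, mul_div_assoc, Finset.sum_div]
    congr 1
    refine Finset.sum_congr rfl fun i _ => ?_
    rw [← Finset.mul_sum, mul_div_assoc]
    congr 1
    rw [sigma_sum rel D χ N X i]
    by_cases hc : (∀ s : S, rhoSetoid D χ rel s ≤ Setoid.ker fun v => i v s)
    · rw [if_pos hc, if_pos hc, hD, ← Finset.prod_div_distrib]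
      refine Finset.prod_congr rfl fun c _ => ?_
      exact (per_color rel D χ hNpos X _ i (fun s => rfl) c).trans rfl
    · rw [if_neg hc, if_neg hc, zero_div]
  have key2 : (∑ i : V → BigIx S N,
        (∏ v : V, Λ v (i v) (i v)) *
          (if (∀ s : S, rhoSetoid D χ rel s ≤ Setoid.ker fun v => i v s) then
            ∏ c : C, colFactor rel D χ N X (fun s => Setoid.ker fun v => i v s) c
          else 0))
      = ∑ π : S → Setoid V,
          (∑ i : V → BigIx S N,
            if (fun s => Setoid.ker fun v => i v s) = π then (∏ v : V, Λ v (i v) (i v))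
            else 0) *
            (if (∀ s : S, rhoSetoid D χ rel s ≤ π s) then
              ∏ c : C, colFactor rel D χ N X π c
            else 0) :=
 by
    have h1 : ∀ π : S → Setoid V, (∑ i : V → BigIx S N,
          if (fun s => Setoid.ker fun v => i v s) = π then (∏ v : V, Λ v (i v) (i v)) else 0) *
          (if (∀ s : S, rhoSetoid D χ rel s ≤ π s) then
            ∏ c : C, colFactor rel D χ N X π c else 0)
        = ∑ i : V → BigIx S N,
            if (fun s => Setoid.ker fun v => i v s) = π then
              (∏ v : V, Λ v (i v) (i v)) *
                (if (∀ s : S, rhoSetoid D χ rel s ≤ π s) then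
                  ∏ c : C, colFactor rel D χ N X π c else 0)
            else 0 := by
      intro π
      rw [Finset.sum_mul]
      exact Finset.sum_congr rfl fun x _ => by split <;> simp
    rw [eq_comm]
    simp_rw [h1]
    rw [Finset.sum_comm]
    refine Finset.sum_congr rfl fun i _ => ?_
    rw [Finset.sum_ite_eq Finset.univ (fun s => Setoid.ker fun v => i v s)
      (fun π => (∏ v : V, Λ v (i v) (i v)) *
        (if (∀ s : S, rhoSetoid D χ rel s ≤ π s) then
          ∏ c : C, colFactor rel D χ N X π c else 0)),
      if_pos (Finset.mem_univ _)]
  rw [key1, key2, Finset.mul_sum, finsum_eq_sum_of_fintype]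
  refine Finset.sum_congr rfl fun π _ => ?_
  -- per-π identification
  have hSrw : (∑ i : V → BigIx S N,
        if (fun s => Setoid.ker fun v => i v s) = π then (∏ v : V, Λ v (i v) (i v)) else 0)
      = ∑ i : V → BigIx S N,
          if (∀ s : S, Setoid.ker (fun v => i v s) = π s) then (∏ v : V, Λ v (i v) (i v))
          else 0 := by
    refine Finset.sum_congr rfl fun i _ => ?_
    exact if_congr funext_iff rfl rfl
  by_cases hc : (∀ s : S, rhoSetoid D χ rel s ≤ π s)
  · rw [if_pos hc, if_pos hc, hSrw]
    rw [lambdaN]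
    simp only [finsum_eq_sum_of_fintype, finprod_eq_prod_of_fintype, colFactor]
    have hsum : (∑ s : S, Nat.card (Quotient (π s)))
        = (∑ s : S, (Nat.card (Quotient (π s)) - 1)) + Fintype.card S := by
      have hpt : ∀ s : S, Nat.card (Quotient (π s))
          = (Nat.card (Quotient (π s)) - 1) + 1 := by
        intro s
        haveI : Nonempty (Quotient (π s)) := ⟨Quotient.mk (π s) (Classical.arbitrary V)⟩
        have : 0 < Nat.card (Quotient (π s)) := Nat.card_pos
        omega
      calc (∑ s : S, Nat.card (Quotient (π s)))
          = ∑ s : S, ((Nat.card (Quotient (π s)) - 1) + 1) :=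
            Finset.sum_congr rfl fun s _ => hpt s
        _ = (∑ s : S, (Nat.card (Quotient (π s)) - 1)) + ∑ _s : S, 1 :=
            Finset.sum_add_distrib
        _ = (∑ s : S, (Nat.card (Quotient (π s)) - 1)) + Fintype.card S := by
            rw [Finset.sum_const, smul_eq_mul, mul_one, Finset.card_univ]
    rw [hsum, pow_add, show (Nat.card S) = Fintype.card S from Nat.card_eq_fintype_card]
    have hNne : (N : ℂ) ≠ 0 := Nat.cast_ne_zero.mpr (Nat.pos_iff_ne_zero.mp hNpos)
    have h1 : ((N : ℂ) ^ (∑ s : S, (Nat.card (Quotient (π s)) - 1))) ≠ 0 := pow_ne_zero _ hNne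
    have helper : ∀ a b Sq Pq : ℂ, a ≠ 0 →
        1 / b * (Sq * Pq) = a * (1 / (a * b) * Sq) * Pq := by
      intro a b Sq Pq ha
      by_cases hb : b = 0
      · simp [hb]
      · field_simp
    exact helper _ _ _ _ h1
  · rw [if_neg hc, if_neg hc, mul_zero, mul_zero]


end Main

end GraphPaper
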